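/- arXiv:0910.3091 — 7 statements merged into one kernel-verified Lean document; each statement's English description precedes it below -/
import Mathlib

section
/- Every infinite compact Hausdorff space K has a bidiscrete system of cardinality d(K), the density of K. -/
open Cardinal

universe u

/-- The density of a topological space: the least cardinality of a dense subset. -/
noncomputable def density (X : Type u) [TopologicalSpace X] : Cardinal.{u} :=
  sInf {c : Cardinal.{u} | ∃ s : Set X, Dense s ∧ #s = c}

/-- A set of pairs of points of `K` is a *bidiscrete system* in `K` if there are
continuous real-valued functions, one for each pair `p` in the system, taking the value `0`
on the first coordinate of `p`, the value `1` on the second coordinate of `p`, and taking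
equal values on the two coordinates of every other pair of the system. -/
def IsBidiscrete {K : Type u} [TopologicalSpace K] (S : Set (K × K)) : Prop :=
  ∃ f : S → C(K, ℝ), ∀ p : S,
    f p (p : K × K).1 = 0 ∧ f p (p : K × K).2 = 1 ∧
    ∀ q : S, q ≠ p → f p (q : K × K).1 = f p (q : K × K).2

/-!
For `d(K) = ℵ₀`, take pairwise disjoint nonempty open sets `U₀, U₁, …` and points `bₙ ∈ Uₙ`:
the pairs `(b₀, bₙ₊₁)` together with Urysohn functions supported in `Uₙ₊₁` form the system.

For `κ = d(K) > ℵ₀`, build pairs `(u_α, x_α)` and functions `f_α` by recursion along `κ`. At stage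
`α` fewer than `κ` points `T` and functions `G` have been used. If every point outside
`closure T` were separated from all other points by `G`, compactness would make the boxes
`{p < g < q}` (`g ∈ G`, `p, q` rational, finitely many at a time) a neighbourhood base at those
points, and a point from each box together with `T` would be a dense set of size `< κ`. So there
are `u_α ≠ x_α` with `x_α ∉ closure T` that no `g ∈ G` separates, and Urysohn's lemma gives `f_α`
vanishing on `T ∪ {u_α}` with `f_α x_α = 1`.
-/

universe v

open Set

section Density

variable {K : Type u} [TopologicalSpace K]

theorem density_le_mk {s : Set K} (hs : Dense s) : density K ≤ #s :=
  csInf_le' ⟨s, hs, rfl⟩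

theorem exists_dense_mk_eq_density (K : Type u) [TopologicalSpace K] :
    ∃ s : Set K, Dense s ∧ #s = density K :=
  csInf_mem (s := {c : Cardinal.{u} | ∃ s : Set K, Dense s ∧ #s = c}) ⟨_, univ, dense_univ, rfl⟩

theorem aleph0_le_density (K : Type u) [TopologicalSpace K] [T1Space K] [Infinite K] :
    ℵ₀ ≤ density K := by
  obtain ⟨s, hs, hcard⟩ := exists_dense_mk_eq_density K
  rw [← hcard, aleph0_le_mk_iff, infinite_coe_iff]
  intro hfin
  have hs_univ : s = (univ : Set K) := hfin.isClosed.closure_eq ▸ hs.closure_eq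
  exact infinite_univ (hs_univ ▸ hfin)

end Density

section RatBox

variable {K : Type u} {ι : Type v} [TopologicalSpace K]

def ratBox (g : ι → C(K, ℝ)) (s : Finset (ι × ℚ × ℚ)) : Set K :=
  {y | ∀ t ∈ s, (t.2.1 : ℝ) < g t.1 y ∧ g t.1 y < t.2.2}

theorem exists_rat_lt_lt_notMem_Icc {a b : ℝ} (h : b ≠ a) :
    ∃ p q : ℚ, (p : ℝ) < a ∧ a < q ∧ b ∉ Icc (p : ℝ) q := by
  rcases h.lt_or_gt with hba | hab
  · obtain ⟨p, hbp, hpa⟩ := exists_rat_btwn hba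
    obtain ⟨q, hq⟩ := exists_rat_gt a
    exact ⟨p, q, hpa, hq, fun hb => hbp.not_ge hb.1⟩
  · obtain ⟨p, hp⟩ := exists_rat_lt a
    obtain ⟨q, haq, hqb⟩ := exists_rat_btwn hab
    exact ⟨p, q, hp, haq, fun hb => hqb.not_ge hb.2⟩

theorem exists_ratBox_subset [CompactSpace K] (g : ι → C(K, ℝ)) {x : K}
    (hx : ∀ y ≠ x, ∃ i, g i y ≠ g i x) {U : Set K} (hU : IsOpen U) (hxU : x ∈ U) :
    ∃ s, x ∈ ratBox g s ∧ ratBox g s ⊆ U := by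
  classical
  have hsep : ∀ y : ↥Uᶜ, ∃ t : ι × ℚ × ℚ, (t.2.1 : ℝ) < g t.1 x ∧ g t.1 x < t.2.2 ∧
      g t.1 y ∉ Icc (t.2.1 : ℝ) t.2.2 := by
    rintro ⟨y, hy⟩
    obtain ⟨i, hi⟩ := hx y (ne_of_mem_of_not_mem hxU hy).symm
    obtain ⟨p, q, hp, hq, hy⟩ := exists_rat_lt_lt_notMem_Icc hi
    exact ⟨(i, p, q), hp, hq, hy⟩
  choose t ht using hsep
  obtain ⟨F, hF⟩ := hU.isClosed_compl.isCompact.elim_finite_subcover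
    (fun y => g (t y).1 ⁻¹' (Icc ((t y).2.1 : ℝ) (t y).2.2)ᶜ)
    (fun y => isClosed_Icc.isOpen_compl.preimage (g _).continuous)
    (fun y hy => mem_iUnion.2 ⟨⟨y, hy⟩, (ht _).2.2⟩)
  refine ⟨F.image t, ?_, fun z hz => ?_⟩
  · simp only [ratBox, Finset.mem_image]
    rintro _ ⟨y, -, rfl⟩
    exact ⟨(ht y).1, (ht y).2.1⟩
  · by_contra hzU
    obtain ⟨y, hyF, hzy⟩ := mem_iUnion₂.1 (hF hzU)
    obtain ⟨hp, hq⟩ := hz (t y) (Finset.mem_image_of_mem t hyF)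
    exact hzy ⟨hp.le, hq.le⟩

theorem exists_mk_le_subset_closure_of_ratBox (g : ι → C(K, ℝ)) {V : Set K}
    (hV : ∀ x ∈ V, ∀ U, IsOpen U → x ∈ U → ∃ s, x ∈ ratBox g s ∧ ratBox g s ⊆ U) :
    ∃ D : Set K, Cardinal.lift.{v} #D ≤ Cardinal.lift.{u} #(Finset (ι × ℚ × ℚ)) ∧
      V ⊆ closure D := by
  refine ⟨range fun s : {s // (ratBox g s).Nonempty} => s.2.some, ?_, fun x hx => ?_⟩
  · exact mk_range_le_lift.trans (Cardinal.lift_le.2 (mk_subtype_le _))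
  · refine mem_closure_iff.2 fun U hU hxU => ?_
    obtain ⟨s, hxs, hsU⟩ := hV x hx U hU hxU
    exact ⟨_, hsU (Nonempty.some_mem ⟨x, hxs⟩), ⟨s, x, hxs⟩, rfl⟩

end RatBox

theorem mk_finset_prod_rat_le (ι : Type v) : #(Finset (ι × ℚ × ℚ)) ≤ max ℵ₀ #ι := by
  classical
  calc #(Finset (ι × ℚ × ℚ)) ≤ #(List (ι × ℚ × ℚ)) := mk_le_of_surjective List.toFinset_surjective
    _ ≤ max ℵ₀ (#ι * ℵ₀) := by simpa using mk_list_le_max (ι × ℚ × ℚ)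
    _ ≤ max ℵ₀ #ι := max_le (le_max_left _ _) ((mul_le_max _ _).trans (by simp [le_total]))

theorem density_le_of_separates {K ι : Type u} [TopologicalSpace K] [CompactSpace K]
    (T : Set K) (g : ι → C(K, ℝ)) (hg : ∀ x ∉ closure T, ∀ y ≠ x, ∃ i, g i y ≠ g i x) :
    density K ≤ #T + max ℵ₀ #ι := by
  obtain ⟨D, hD, hTD⟩ := exists_mk_le_subset_closure_of_ratBox g
    fun x hx U hU hxU => exists_ratBox_subset g (hg x hx) hU hxU
  have hdense : Dense (T ∪ D) := by
    refine dense_iff_closure_eq.2 (eq_univ_of_forall fun x => ?_)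
    rw [closure_union]
    by_cases hx : x ∈ closure T
    exacts [Or.inl hx, Or.inr (hTD hx)]
  have hDcard : #D ≤ max ℵ₀ #ι := by
    rw [Cardinal.lift_id, Cardinal.lift_id] at hD
    exact hD.trans (mk_finset_prod_rat_le ι)
  calc density K ≤ #(T ∪ D : Set K) := density_le_mk hdense
    _ ≤ #T + #D := mk_union_le T D
    _ ≤ #T + max ℵ₀ #ι := by gcongr

theorem exists_ne_notMem_closure_forall_eq {K ι : Type u} [TopologicalSpace K] [CompactSpace K]
    (hK : ℵ₀ < density K) {T : Set K} (hT : #T < density K) (g : ι → C(K, ℝ))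
    (hι : #ι < density K) : ∃ u x : K, u ≠ x ∧ x ∉ closure T ∧ ∀ i, g i u = g i x := by
  by_contra! h
  refine (density_le_of_separates T g fun x hx y hyx => ?_).not_gt
    (add_lt_of_lt hK.le hT (max_lt hK hι))
  simpa [eq_comm] using h y x hyx hx

/-- Transfinite recursion along an initial ordinal: by `hι`, every initial segment of `ι` has
fewer than `#ι` elements, so each stage only has to extend a set of fewer than `#ι` choices. -/
theorem exists_family_of_forall_small_exists {ι α : Type u} [LinearOrder ι] [WellFoundedLT ι]
    (hι : (#ι).ord = Ordinal.type (α := ι) (· < ·)) (P : α → Prop) (R : α → α → Prop)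
    (h : ∀ s : Set α, #s < #ι → ∃ b, P b ∧ ∀ a ∈ s, R a b) :
    ∃ f : ι → α, ∀ i, P (f i) ∧ ∀ j < i, R (f j) (f i) := by
  rcases isEmpty_or_nonempty ι with hι | ⟨⟨i₀⟩⟩
  · exact ⟨isEmptyElim, isEmptyElim⟩
  have : Nonempty α := ⟨(h ∅ (by simpa using (mk_Iio_lt i₀ hι).pos)).choose⟩
  let f : ι → α := WellFoundedLT.fix fun i prev =>
    Classical.epsilon fun b => P b ∧ ∀ j (hj : j < i), R (prev j hj) b
  have hf : ∀ i, f i = Classical.epsilon fun b => P b ∧ ∀ j < i, R (f j) b :=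
    WellFoundedLT.fix_eq _
  refine ⟨f, fun i => ?_⟩
  obtain ⟨b, hb, hR⟩ := h (range fun j : Iio i => f j) (mk_range_le.trans_lt (mk_Iio_lt i hι))
  rw [hf i]
  exact Classical.epsilon_spec (p := fun b => P b ∧ ∀ j < i, R (f j) b)
    ⟨b, hb, fun j hj => hR _ ⟨⟨j, hj⟩, rfl⟩⟩

structure IsBidiscreteFamily {K ι : Type*} [TopologicalSpace K] (p : ι → K × K)
    (f : ι → C(K, ℝ)) : Prop where
  apply_fst : ∀ i, f i (p i).1 = 0
  apply_snd : ∀ i, f i (p i).2 = 1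
  apply_fst_eq_apply_snd : ∀ i j, i ≠ j → f i (p j).1 = f i (p j).2

namespace IsBidiscreteFamily

variable {K : Type u} {ι : Type v} [TopologicalSpace K] {p : ι → K × K} {f : ι → C(K, ℝ)}

theorem injective (h : IsBidiscreteFamily p f) : Function.Injective p := by
  intro i j hij
  by_contra hne
  have := h.apply_fst_eq_apply_snd i j hne
  rw [← hij, h.apply_fst, h.apply_snd] at this
  exact zero_ne_one this

theorem isBidiscrete_range (h : IsBidiscreteFamily p f) : IsBidiscrete (range p) := by
  let e := Equiv.ofInjective p h.injective
  refine ⟨fun q => f (e.symm q), fun q => ?_⟩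
  obtain ⟨i, rfl⟩ := e.surjective q
  refine ⟨by simpa [e] using h.apply_fst i, by simpa [e] using h.apply_snd i, fun q hq => ?_⟩
  obtain ⟨j, rfl⟩ := e.surjective q
  simpa [e] using h.apply_fst_eq_apply_snd i j (fun hij => hq (by rw [hij]))

theorem exists_isBidiscrete_mk_eq (h : IsBidiscreteFamily p f) :
    ∃ S : Set (K × K), IsBidiscrete S ∧ Cardinal.lift.{v} #S = Cardinal.lift.{u} #ι :=
  ⟨range p, h.isBidiscrete_range, mk_range_eq_of_injective h.injective⟩

end IsBidiscreteFamily

theorem exists_isBidiscreteFamily_nat (K : Type*) [TopologicalSpace K] [T2Space K]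
    [NormalSpace K] [Infinite K] :
    ∃ (p : ℕ → K × K) (f : ℕ → C(K, ℝ)), IsBidiscreteFamily p f := by
  obtain ⟨U, hUne, hUo, hUd⟩ := exists_seq_infinite_isOpen_pairwise_disjoint K
  choose b hb using fun n => (hUne n).nonempty
  have hUf : ∀ n, ∃ f : C(K, ℝ), f (b (n + 1)) = 1 ∧ ∀ y ∉ U (n + 1), f y = 0 := fun n => by
    obtain ⟨f, hf0, hf1, -⟩ := exists_continuous_zero_one_of_isClosed (hUo (n + 1)).isClosed_compl
      isClosed_singleton (disjoint_singleton_right.2 fun h => h (hb (n + 1)))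
    exact ⟨f, hf1 rfl, fun y hy => hf0 hy⟩
  choose f hf1 hf0 using hUf
  have hb_notMem : ∀ m n, m ≠ n → b m ∉ U n := fun m n hmn =>
    disjoint_left.1 (hUd hmn) (hb m)
  refine ⟨fun n => (b 0, b (n + 1)), f, fun n => hf0 n _ (hb_notMem _ _ (by omega)),
    hf1, fun m n hmn => ?_⟩
  rw [hf0 m _ (hb_notMem _ _ (by omega)), hf0 m _ (hb_notMem _ _ (by omega))]

theorem exists_pair_extending_of_mk_lt_density {K : Type u} [TopologicalSpace K]
    [CompactSpace K] [T2Space K] (hK : ℵ₀ < density K) (s : Set ((K × K) × C(K, ℝ)))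
    (hs : #s < density K) :
    ∃ b : (K × K) × C(K, ℝ), (b.2 b.1.1 = 0 ∧ b.2 b.1.2 = 1) ∧
      ∀ a ∈ s, a.2 b.1.1 = a.2 b.1.2 ∧ b.2 a.1.1 = 0 ∧ b.2 a.1.2 = 0 := by
  set T := (fun a => a.1.1) '' s ∪ (fun a => a.1.2) '' s
  have hT : #T < density K := (mk_union_le _ _).trans_lt
    (add_lt_of_lt hK.le (mk_image_le.trans_lt hs) (mk_image_le.trans_lt hs))
  obtain ⟨u, x, hux, hxT, hg⟩ :=
    exists_ne_notMem_closure_forall_eq hK hT (fun a : s => a.1.2) hs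
  obtain ⟨f, hf0, hf1, -⟩ := exists_continuous_zero_one_of_isClosed
    (isClosed_closure.union isClosed_singleton) isClosed_singleton
    (disjoint_singleton_right.2 (by rintro (h | h); exacts [hxT h, hux h.symm]))
  refine ⟨((u, x), f), ⟨hf0 (Or.inr rfl), hf1 rfl⟩, fun a ha =>
    ⟨hg ⟨a, ha⟩, hf0 (Or.inl ?_), hf0 (Or.inl ?_)⟩⟩
  exacts [subset_closure (Or.inl ⟨a, ha, rfl⟩), subset_closure (Or.inr ⟨a, ha, rfl⟩)]

theorem exists_isBidiscreteFamily_of_aleph0_lt_density {K : Type u} [TopologicalSpace K]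
    [CompactSpace K] [T2Space K] (hK : ℵ₀ < density K) :
    ∃ (p : (density K).ord.ToType → K × K) (f : _ → C(K, ℝ)), IsBidiscreteFamily p f := by
  obtain ⟨F, hF⟩ := exists_family_of_forall_small_exists (ι := (density K).ord.ToType)
    (by simp) _ _ fun s hs => exists_pair_extending_of_mk_lt_density hK s (by simpa using hs)
  refine ⟨fun i => (F i).1, fun i => (F i).2, fun i => (hF i).1.1, fun i => (hF i).1.2,
    fun i j hij => ?_⟩
  rcases hij.lt_or_gt with hij | hji
  · exact ((hF j).2 i hij).1
  · rw [((hF i).2 j hji).2.1, ((hF i).2 j hji).2.2]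

/-- Every infinite compact Hausdorff space `K` has a bidiscrete system of
cardinality `d(K)`, the density of `K`. -/
theorem every_infinite_compactum_has_bidiscrete_system_of_density_size
    (K : Type u) [TopologicalSpace K] [CompactSpace K] [T2Space K] [Infinite K] :
    ∃ S : Set (K × K), IsBidiscrete S ∧ #S = density K := by
  rcases (aleph0_le_density K).lt_or_eq with hK | hK
  · obtain ⟨p, f, hpf⟩ := exists_isBidiscreteFamily_of_aleph0_lt_density hK
    obtain ⟨S, hS, hcard⟩ := hpf.exists_isBidiscrete_mk_eq
    exact ⟨S, hS, by simpa using hcard⟩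
  · obtain ⟨p, f, hpf⟩ := exists_isBidiscreteFamily_nat K
    obtain ⟨S, hS, hcard⟩ := hpf.exists_isBidiscrete_mk_eq
    exact ⟨S, hS, by simpa [← hK] using hcard⟩
end

section
/- Suppose X is a compact Hausdorff space and κ is an uncountable cardinal such that d(X) ≥ κ and every non-empty open subspace of X has weight ≥ κ. Then X has a bidiscrete system of cardinality κ. -/
open Cardinal

universe u

/-- The weight of a topological space: the least cardinality of a base for the topology. -/
noncomputable def weight (X : Type u) [TopologicalSpace X] : Cardinal.{u} :=
  sInf {c : Cardinal.{u} |
    ∃ B : Set (Set X), TopologicalSpace.IsTopologicalBasis B ∧ #B = c}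

open Set TopologicalSpace Topology

/-! Build the system greedily, each pair together with a Urysohn function witnessing it. While
the family `T` has fewer than `κ` members, the set `E` of their points is not dense, so some point
has a closed neighbourhood `W` disjoint from `closure E`. The functions of `T` cannot separate all
points of `W`: they would then embed this compact set into `ℝ^T`, giving the interior of `W`
weight at most `max #T ℵ₀ < κ`. Two points `a ≠ b` of `W` not separated by `T`, together with a
Urysohn function vanishing on `closure E ∪ {a}` and equal to `1` at `b`, extend the family. -/

theorem exists_pairwise_mk_eq {α : Type u} {r : α → α → Prop} {κ : Cardinal.{u}}
    (h : ∀ T : Set α, T.Pairwise r → #T < κ → ∃ a ∉ T, (insert a T).Pairwise r) :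
    ∃ T : Set α, T.Pairwise r ∧ #T = κ := by
  obtain ⟨M, hM⟩ := zorn_subset {T : Set α | T.Pairwise r} fun c hc hchain =>
    ⟨⋃₀ c, (pairwise_sUnion hchain.directedOn).2 hc, fun _ => subset_sUnion_of_mem⟩
  have hκM : κ ≤ #M := not_lt.1 fun hlt => by
    obtain ⟨a, haM, ha⟩ := h M hM.1 hlt
    exact haM (hM.2 ha (subset_insert a M) (mem_insert a M))
  obtain ⟨T, hTM, hT⟩ := le_mk_iff_exists_subset.1 hκM
  exact ⟨T, hM.1.mono hTM, hT⟩

section CardinalInvariants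

variable {X : Type u} [TopologicalSpace X]

lemma density_le_mk_of_dense {s : Set X} (hs : Dense s) : density X ≤ #s :=
  csInf_le' ⟨s, hs, rfl⟩

lemma weight_le_mk_of_isTopologicalBasis {B : Set (Set X)} (hB : IsTopologicalBasis B) :
    weight X ≤ #B :=
  csInf_le' ⟨B, hB, rfl⟩

lemma weight_le_mk_of_isInducing {Y : Type u} [TopologicalSpace Y] {g : X → Y}
    (hg : IsInducing g) {B : Set (Set Y)} (hB : IsTopologicalBasis B) : weight X ≤ #B :=
  (weight_le_mk_of_isTopologicalBasis (hB.isInducing hg)).trans mk_image_le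

lemma exists_isTopologicalBasis_pi_real_mk_le (ι : Type u) :
    ∃ B : Set (Set (ι → ℝ)), IsTopologicalBasis B ∧ #B ≤ max #ι ℵ₀ := by
  obtain ⟨B₀, hB₀c, -, hB₀⟩ := exists_countable_basis ℝ
  have : Countable B₀ := hB₀c.to_subtype
  refine ⟨_, isTopologicalBasis_pi fun _ => hB₀, ?_⟩
  -- a basic open set is cut out by a finite list of constraints `g i ∈ b` with `b ∈ B₀`
  let cylinder : List (ι × B₀) → Set (ι → ℝ) := fun l => {g | ∀ p ∈ l, g p.1 ∈ (p.2 : Set ℝ)}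
  have hsub : {S | ∃ (U : ι → Set ℝ) (F : Finset ι), (∀ i ∈ F, U i ∈ B₀) ∧ S = (F : Set ι).pi U}
      ⊆ range cylinder := by
    rintro S ⟨U, F, hU, rfl⟩
    refine ⟨F.toList.attach.map fun i => (i.1, ⟨U i.1, hU i.1 (Finset.mem_toList.1 i.2)⟩), ?_⟩
    ext g
    simp only [cylinder, mem_ofPred_eq, List.mem_map, List.mem_attach, true_and, mem_pi,
      Finset.mem_coe]
    constructor
    · rintro hg i hi
      exact hg (i, ⟨U i, hU i hi⟩) ⟨⟨i, Finset.mem_toList.2 hi⟩, rfl⟩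
    · rintro hg p ⟨⟨i, hi⟩, rfl⟩
      exact hg i (Finset.mem_toList.1 hi)
  calc #_ ≤ #(range cylinder) := mk_le_mk_of_subset hsub
    _ ≤ #(List (ι × B₀)) := mk_range_le
    _ ≤ max ℵ₀ #(ι × B₀) := mk_list_le_max _
    _ ≤ max #ι ℵ₀ := by
      rw [mk_prod, lift_uzero]
      exact max_le (le_max_right _ _) ((mul_le_mul_right (lift_le_aleph0.2 mk_le_aleph0) _).trans
        ((mul_le_max _ _).trans (by simp)))

lemma weight_le_of_isInducing_pi {ι : Type u} {g : X → ι → ℝ} (hg : IsInducing g) :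
    weight X ≤ max #ι ℵ₀ := by
  obtain ⟨B, hB, hBcard⟩ := exists_isTopologicalBasis_pi_real_mk_le ι
  exact (weight_le_mk_of_isInducing hg hB).trans hBcard

lemma exists_ne_forall_eq_of_lt_weight {K U : Set X} (hK : IsCompact K) (hUK : U ⊆ K)
    {ι : Type u} (f : ι → C(X, ℝ)) (hU : max #ι ℵ₀ < weight U) :
    ∃ a ∈ K, ∃ b ∈ K, a ≠ b ∧ ∀ i, f i a = f i b := by
  by_contra! hsep
  have : CompactSpace K := isCompact_iff_compactSpace.1 hK
  let G : K → ι → ℝ := fun a i => f i a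
  have hG : IsClosedEmbedding G := by
    refine Continuous.isClosedEmbedding (by fun_prop) fun a b hab => Subtype.ext ?_
    by_contra hne
    obtain ⟨i, hi⟩ := hsep a a.2 b b.2 hne
    exact hi (congrFun hab i)
  have hind : IsInducing (G ∘ inclusion hUK) :=
    hG.isInducing.comp (IsEmbedding.inclusion hUK).isInducing
  exact (weight_le_of_isInducing_pi hind).not_gt hU

lemma exists_ne_notMem_closure_forall_eq_s2 [CompactSpace X] [RegularSpace X] {κ : Cardinal.{u}}
    (hw : ∀ U : Set X, IsOpen U → U.Nonempty → κ ≤ weight U)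
    {E : Set X} (hE : ¬Dense E) {ι : Type u} (f : ι → C(X, ℝ)) (hι : max #ι ℵ₀ < κ) :
    ∃ a b, a ∉ closure E ∧ b ∉ closure E ∧ a ≠ b ∧ ∀ i, f i a = f i b := by
  obtain ⟨x, hx⟩ : (closure E)ᶜ.Nonempty :=
    nonempty_compl.2 fun h => hE (dense_iff_closure_eq.2 h)
  obtain ⟨W, hWx, hWc, hWE⟩ :=
    exists_mem_nhds_isClosed_subset (isClosed_closure.isOpen_compl.mem_nhds hx)
  obtain ⟨a, ha, b, hb, hab, hfab⟩ := exists_ne_forall_eq_of_lt_weight hWc.isCompact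
    interior_subset f (hι.trans_le (hw _ isOpen_interior ⟨x, mem_interior_iff_mem_nhds.2 hWx⟩))
  exact ⟨a, b, hWE ha, hWE hb, hab, hfab⟩

end CardinalInvariants

/-- A set `T` of these with `T.Pairwise Ignores` is a bidiscrete system `pair '' T` bundled with
its witnessing functions. -/
structure SeparatedPair (K : Type u) [TopologicalSpace K] where
  pair : K × K
  sep : C(K, ℝ)
  sep_fst : sep pair.1 = 0
  sep_snd : sep pair.2 = 1

namespace SeparatedPair

variable {K : Type u} [TopologicalSpace K]

def Ignores (s t : SeparatedPair K) : Prop :=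
  s.sep t.pair.1 = s.sep t.pair.2

lemma injOn_pair {T : Set (SeparatedPair K)} (hT : T.Pairwise Ignores) : InjOn pair T := by
  intro s hs t ht hst
  by_contra hne
  have hs_t : s.sep t.pair.1 = s.sep t.pair.2 := hT hs ht hne
  rw [← hst, s.sep_fst, s.sep_snd] at hs_t
  exact zero_ne_one hs_t

lemma isBidiscrete_image_pair {T : Set (SeparatedPair K)} (hT : T.Pairwise Ignores) :
    IsBidiscrete (pair '' T) := by
  let e : T ≃ pair '' T := (injOn_pair hT).bijOn_image.equiv pair
  have he : ∀ p, (e.symm p : SeparatedPair K).pair = p := fun p =>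
    congrArg Subtype.val (e.apply_symm_apply p)
  refine ⟨fun p => (e.symm p).1.sep, fun p => ⟨?_, ?_, fun q hqp => ?_⟩⟩
  · simpa only [he] using (e.symm p).1.sep_fst
  · simpa only [he] using (e.symm p).1.sep_snd
  · simpa only [Ignores, he] using hT (e.symm p).2 (e.symm q).2 fun h =>
      hqp (e.symm.injective (Subtype.ext h)).symm

variable [CompactSpace K] [T2Space K] {κ : Cardinal.{u}}

lemma exists_insert_pairwise_ignores (hκ : ℵ₀ < κ) (hd : κ ≤ density K)
    (hw : ∀ U : Set K, IsOpen U → U.Nonempty → κ ≤ weight U) {T : Set (SeparatedPair K)}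
    (hT : T.Pairwise Ignores) (hTκ : #T < κ) : ∃ s ∉ T, (insert s T).Pairwise Ignores := by
  set E : Set K := (fun t => t.pair.1) '' T ∪ (fun t => t.pair.2) '' T
  have hE : #E < κ := (mk_union_le _ _).trans_lt
    (add_lt_of_lt hκ.le (mk_image_le.trans_lt hTκ) (mk_image_le.trans_lt hTκ))
  have hEd : ¬Dense E := fun h => ((hd.trans (density_le_mk_of_dense h)).trans_lt hE).false
  obtain ⟨a, b, ha, hb, hab, hfab⟩ :=
    exists_ne_notMem_closure_forall_eq_s2 hw hEd (fun t : T => t.1.sep) (max_lt hTκ hκ)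
  obtain ⟨f, hf0, hf1, -⟩ := exists_continuous_zero_one_of_isClosed
    (isClosed_closure.union isClosed_singleton) isClosed_singleton
    (disjoint_singleton_right.2 fun hb' => hb'.elim hb fun hba => hab hba.symm)
  let s : SeparatedPair K := ⟨(a, b), f, hf0 (Or.inr rfl), hf1 rfl⟩
  have hf0E : ∀ x ∈ E, f x = 0 := fun x hx => hf0 (Or.inl (subset_closure hx))
  refine ⟨s, fun hs => ha (subset_closure (Or.inl ⟨s, hs, rfl⟩)),
    pairwise_insert.2 ⟨hT, fun t ht _ => ⟨?_, hfab ⟨t, ht⟩⟩⟩⟩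
  show f t.pair.1 = f t.pair.2
  rw [hf0E _ (Or.inl ⟨t, ht, rfl⟩), hf0E _ (Or.inr ⟨t, ht, rfl⟩)]

end SeparatedPair

/-- If `X` is a compact Hausdorff space, `κ` is an uncountable cardinal, `d(X) ≥ κ` and
every non-empty open subspace of `X` has weight `≥ κ`, then `X` has a bidiscrete system
of cardinality `κ`. -/
theorem bidiscrete_of_density_ge_of_open_weight_ge
    (X : Type u) [TopologicalSpace X] [CompactSpace X] [T2Space X]
    (κ : Cardinal.{u}) (hκ : ℵ₀ < κ) (hd : κ ≤ density X)
    (hw : ∀ U : Set X, IsOpen U → U.Nonempty → κ ≤ weight U) :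
    ∃ S : Set (X × X), IsBidiscrete S ∧ #S = κ := by
  obtain ⟨T, hT, hTκ⟩ := exists_pairwise_mk_eq fun T hT hTκ =>
    SeparatedPair.exists_insert_pairwise_ignores hκ hd hw hT hTκ
  exact ⟨_, SeparatedPair.isBidiscrete_image_pair hT,
    (mk_image_eq_of_injOn _ _ (SeparatedPair.injOn_pair hT)).trans hTκ⟩
end

section
/- Suppose K is a compact Hausdorff space, I is an index set, and for each i ∈ I we have sets F_i ⊆ G_i ⊆ K such that the G_i are pairwise disjoint open sets, each F_i is closed, and S_i is a bidiscrete system in the subspace F_i. Then the union ⋃_{i ∈ I} S_i is a bidiscrete system in K. -/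
/-!
Extend each function witnessing that `S i` is bidiscrete from the closed set `F i` to `K` by
Tietze, and multiply it by an Urysohn function that is `1` on `F i` and `0` off `G i`. Since the
`G i` are disjoint, the product is `0` on every pair of `S j` for `j ≠ i`, while on `S i` it
agrees with the original witness.
-/

universe u v

open Set

theorem IsBidiscrete.image_of_isClosedEmbedding {X Y : Type*} [TopologicalSpace X]
    [TopologicalSpace Y] [NormalSpace Y] {S : Set (X × X)} (hS : IsBidiscrete S) {e : X → Y}
    (he : Topology.IsClosedEmbedding e) : IsBidiscrete (Prod.map e e '' S) := by
  obtain ⟨f, hf⟩ := hS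
  choose g hg using fun s : S => (f s).exists_extension' he
  have hg_apply : ∀ s x, g s (e x) = f s x := fun s x => congrFun (hg s) x
  choose pre hpre using fun p : ↥(Prod.map e e '' S) =>
    let ⟨s, hs, hsp⟩ := p.2; (⟨⟨s, hs⟩, hsp⟩ : ∃ s : S, Prod.map e e s = p)
  refine ⟨fun p => g (pre p), fun p => ?_⟩
  obtain ⟨h0, h1, hne⟩ := hf (pre p)
  refine ⟨?_, ?_, fun q hqp => ?_⟩
  · rw [← hpre p, Prod.map_fst, hg_apply, h0]
  · rw [← hpre p, Prod.map_snd, hg_apply, h1]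
  · have hpre_ne : pre q ≠ pre p := fun h =>
      hqp (Subtype.ext (by rw [← hpre q, ← hpre p, h]))
    rw [← hpre q, Prod.map_fst, Prod.map_snd, hg_apply, hg_apply, hne _ hpre_ne]

theorem isBidiscrete_iUnion {K : Type*} [TopologicalSpace K] {I : Type*}
    {T : I → Set (K × K)} {A : I → Set K} (hTA : ∀ i, T i ⊆ A i ×ˢ A i)
    (hT : ∀ i, IsBidiscrete (T i)) (g : I → C(K, ℝ)) (hg_one : ∀ i, EqOn (g i) 1 (A i))
    (hg_zero : ∀ i j, i ≠ j → EqOn (g i) 0 (A j)) : IsBidiscrete (⋃ i, T i) := by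
  choose f hf using hT
  choose idx hidx using fun p : ↥(⋃ i, T i) => mem_iUnion.1 p.2
  refine ⟨fun p => f (idx p) ⟨p, hidx p⟩ * g (idx p), fun p => ?_⟩
  obtain ⟨h0, h1, hne⟩ := hf (idx p) ⟨p, hidx p⟩
  have hpA := hTA _ (hidx p)
  refine ⟨by simp [h0], by simp [h1, hg_one _ hpA.2], fun q hqp => ?_⟩
  obtain ⟨j, hqj⟩ := mem_iUnion.1 q.2
  have hqA := hTA j hqj
  by_cases hj : j = idx p
  · subst hj
    have := hne ⟨q, hqj⟩ fun h => hqp (Subtype.ext (congrArg Subtype.val h :))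
    simp [this, hg_one _ hqA.1, hg_one _ hqA.2]
  · simp [hg_zero _ _ (Ne.symm hj) hqA.1, hg_zero _ _ (Ne.symm hj) hqA.2]

/-- Suppose `K` is a compact Hausdorff space and `F i ⊆ G i ⊆ K` for `i ∈ I` are such that
the `G i` are pairwise disjoint open sets, the `F i` are closed, and each `S i` is a
bidiscrete system in the subspace `F i`. Then the union `⋃ i, S i` (viewed as a set of
pairs of points of `K`) is a bidiscrete system in `K`. -/
theorem union_bidiscrete_of_separated
    {K : Type u} [TopologicalSpace K] [CompactSpace K] [T2Space K]
    {I : Type v} (F G : I → Set K)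
    (hFG : ∀ i, F i ⊆ G i)
    (hGopen : ∀ i, IsOpen (G i))
    (hGdisj : Pairwise (Function.onFun Disjoint G))
    (hFclosed : ∀ i, IsClosed (F i))
    (S : ∀ i, Set (↥(F i) × ↥(F i)))
    (hS : ∀ i, IsBidiscrete (S i)) :
    IsBidiscrete
      (⋃ i, (fun p : ↥(F i) × ↥(F i) => ((p.1 : K), (p.2 : K))) '' S i) := by
  have hcompl_disj : ∀ i, Disjoint (G i)ᶜ (F i) := fun i =>
    disjoint_compl_left.mono_right (hFG i)
  choose g hg_zero hg_one _ using fun i =>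
    exists_continuous_zero_one_of_isClosed (hGopen i).isClosed_compl (hFclosed i)
      (hcompl_disj i)
  refine isBidiscrete_iUnion (A := F) (fun i => ?_)
    (fun i => (hS i).image_of_isClosedEmbedding (hFclosed i).isClosedEmbedding_subtypeVal)
    g hg_one fun i j hij x hx => hg_zero i fun hxG => (hGdisj hij).ne_of_mem hxG (hFG j hx) rfl
  rintro _ ⟨p, -, rfl⟩
  exact ⟨p.1.2, p.2.2⟩
end

section
/- If a compact Hausdorff space K has a discrete subspace of cardinality κ ≥ ℵ₀, then K has a bidiscrete system of cardinality κ. -/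
/-!
Fix a point `z ∈ D`. Every `d ∈ D` is isolated in `D`, so complete regularity of `K` gives
`f_d ∈ C(K, ℝ)` with `f_d d = 1` and `f_d = 0` on `D \ {d}`. The pairs `(z, d)`, `d ∈ D \ {z}`,
together with the functions `f_d` form a bidiscrete system: every other pair `(z, e)` has both
coordinates in `D \ {d}`. Removing one point does not change the cardinality of the infinite
set `D`.
-/

open Cardinal

universe u

open Set Function

theorem Cardinal.mk_diff_singleton_of_aleph0_le {α : Type*} {s : Set α} (hs : ℵ₀ ≤ #s)
    (a : α) : #(s \ {a} : Set α) = #s := by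
  by_cases ha : a ∈ s
  · have hsum : #(s \ {a} : Set α) + 1 = #s := by
      simpa using mk_sdiff_add_mk (singleton_subset_iff.mpr ha)
    have hinf : ℵ₀ ≤ #(s \ {a} : Set α) := by
      simpa [← hsum, aleph0_le_add_iff, one_lt_aleph0.not_ge] using hs
    rw [← hsum, add_one_eq hinf]
  · rw [sdiff_singleton_eq_self ha]

theorem exists_continuousMap_eq_one_eqOn_zero_of_discreteTopology {K : Type*}
    [TopologicalSpace K] [CompletelyRegularSpace K] {D : Set K} (hD : DiscreteTopology D)
    {d : K} (hd : d ∈ D) : ∃ f : C(K, ℝ), f d = 1 ∧ EqOn f 0 (D \ {d}) := by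
  obtain ⟨U, hU, hUD⟩ := discreteTopology_subtype_iff'.mp hD d hd
  have hdU : d ∈ U := (hUD.symm ▸ mem_singleton d : d ∈ U ∩ D).1
  obtain ⟨g, hg, hgd, hgU⟩ := CompletelyRegularSpace.completely_regular_isOpen d U hU hdU
  refine ⟨⟨fun x => 1 - g x, by fun_prop⟩, by simp [hgd], fun e he => ?_⟩
  have heU : e ∉ U := fun heU => he.2 (hUD ▸ ⟨heU, he.1⟩)
  simp [hgU heU]

theorem isBidiscrete_range {ι : Type*} {K : Type u} [TopologicalSpace K] {p : ι → K × K}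
    (f : ι → C(K, ℝ)) (h₀ : ∀ i, f i (p i).1 = 0)
    (h₁ : ∀ i, f i (p i).2 = 1) (heq : ∀ i j, j ≠ i → f i (p j).1 = f i (p j).2) :
    IsBidiscrete (range p) := by
  refine ⟨fun q => f (rangeSplitting p q), fun q => ⟨?_, ?_, fun q' hq' => ?_⟩⟩
  · rw [← apply_rangeSplitting p q]; exact h₀ _
  · rw [← apply_rangeSplitting p q]; exact h₁ _
  · rw [← apply_rangeSplitting p q']
    exact heq _ _ ((rangeSplitting_injective p).ne hq')

/-- If a compact Hausdorff space `K` has a discrete subspace of cardinality `κ ≥ ℵ₀`,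
then `K` has a bidiscrete system of cardinality `κ`. -/
theorem bidiscrete_of_discrete_subspace
    {K : Type u} [TopologicalSpace K] [CompactSpace K] [T2Space K]
    (D : Set K) (hD : DiscreteTopology D)
    (κ : Cardinal.{u}) (hκ : ℵ₀ ≤ κ) (hcard : #D = κ) :
    ∃ S : Set (K × K), IsBidiscrete S ∧ #S = κ := by
  subst hcard
  obtain ⟨z, hz⟩ : D.Nonempty := (infinite_coe_iff.mp (infinite_iff.mpr hκ)).nonempty
  choose f hf₁ hf₀ using fun d : ↥(D \ {z}) =>
    exists_continuousMap_eq_one_eqOn_zero_of_discreteTopology hD d.2.1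
  have hfz : ∀ d, f d z = 0 := fun d => hf₀ d ⟨hz, Ne.symm d.2.2⟩
  have hinj : Injective fun d : ↥(D \ {z}) => (z, (d : K)) :=
    fun d e h => Subtype.ext (congrArg Prod.snd h)
  refine ⟨range fun d : ↥(D \ {z}) => (z, (d : K)), isBidiscrete_range f hfz hf₁ ?_, ?_⟩
  · intro d e hed
    rw [hfz, hf₀ d ⟨e.2.1, Subtype.val_injective.ne hed⟩, Pi.zero_apply]
  · rw [mk_range_eq _ hinj, mk_diff_singleton_of_aleph0_le hκ]
end

section
/- Let K be the split interval, i.e., the set [0,1] × {0,1} equipped with the order topology of the lexicographic order. Then the family {((x,0), (x,1)) : x ∈ [0,1]} is a very nice bidiscrete system in K; this is exemplified by the clopen sets H_x = {r ∈ K : r > (x,0)} for x ∈ [0,1]. -/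
/-- The split interval (double arrow space): the set `[0,1] × {0,1}` with the
lexicographic order. It carries the order topology (declared below). -/
def SplitInterval : Type := Lex (↥(Set.Icc (0 : ℝ) 1) × Bool)

noncomputable instance : LinearOrder SplitInterval :=
  inferInstanceAs (LinearOrder (Lex (↥(Set.Icc (0 : ℝ) 1) × Bool)))

noncomputable instance : TopologicalSpace SplitInterval := Preorder.topology SplitInterval

instance : OrderTopology SplitInterval := ⟨rfl⟩

/-- The point `(x, l)` of the split interval, for `x ∈ [0,1]` and `l ∈ {0,1}`. -/
def SplitInterval.mk (x : ↥(Set.Icc (0 : ℝ) 1)) (l : Bool) : SplitInterval :=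
  toLex (x, l)

/-! A point `(x, 0)` of the split interval is covered by `(x, 1)`, so `H_x = Ioi (x, 0)` is also
the closed ray `Ici (x, 1)`; in any order topology such a ray is clopen. For `y ≠ x` the
lexicographic order compares `(x, 0)` with `(y, l)` by the first coordinates alone, so
`H_x` cannot separate `(y, 0)` from `(y, 1)`. -/

open Set

theorem CovBy.isClopen_Ioi {α : Type*} [LinearOrder α] [TopologicalSpace α]
    [ClosedIciTopology α] [ClosedIicTopology α] {a b : α} (h : a ⋖ b) : IsClopen (Ioi a) :=
  ⟨h.Ioi_eq ▸ isClosed_Ici, isOpen_Ioi⟩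

namespace SplitInterval

theorem mk_false_covBy_mk_true (x : ↥(Icc (0 : ℝ) 1)) : mk x false ⋖ mk x true :=
  Prod.Lex.toLex_covBy_toLex_iff.2 (Or.inl ⟨rfl, by decide⟩)

theorem mk_lt_mk_iff_of_ne {x y : ↥(Icc (0 : ℝ) 1)} {a b : Bool} (h : x ≠ y) :
    mk x a < mk y b ↔ x < y :=
  Prod.Lex.toLex_lt_toLex.trans (or_iff_left fun h' => h h'.1)

end SplitInterval

/-- In the split interval `K`, the family `{((x,0), (x,1)) : x ∈ [0,1]}` is a very nice
bidiscrete system, as exemplified by the clopen sets `H_x = {r ∈ K : r > (x,0)}`: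
each `H_x` is clopen, contains `(x,1)` but not `(x,0)`, and for `y ≠ x` it contains
`(y,0)` if and only if it contains `(y,1)`. -/
theorem splitInterval_very_nice_bidiscrete :
    ∀ x : ↥(Set.Icc (0 : ℝ) 1),
      IsClopen {r : SplitInterval | SplitInterval.mk x false < r} ∧
      SplitInterval.mk x true ∈ {r : SplitInterval | SplitInterval.mk x false < r} ∧
      SplitInterval.mk x false ∉ {r : SplitInterval | SplitInterval.mk x false < r} ∧
      ∀ y : ↥(Set.Icc (0 : ℝ) 1), y ≠ x →
        (SplitInterval.mk y false ∈ {r : SplitInterval | SplitInterval.mk x false < r} ↔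
          SplitInterval.mk y true ∈ {r : SplitInterval | SplitInterval.mk x false < r}) := by
  intro x
  have hcov := SplitInterval.mk_false_covBy_mk_true x
  refine ⟨hcov.isClopen_Ioi, hcov.lt, lt_irrefl (SplitInterval.mk x false), fun y hyx => ?_⟩
  exact (SplitInterval.mk_lt_mk_iff_of_ne hyx.symm).trans
    (SplitInterval.mk_lt_mk_iff_of_ne hyx.symm).symm
end

section
/- Let K be a non-empty closed subset of 2^{ω₁} satisfying conditions (R4) and (R8) with split points s_α (ω ≤ α < ω₁). Then for any two distinct ordinals α, β with ω ≤ α, β < ω₁, we have s_α↾ω ≠ s_β↾ω. -/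
noncomputable section

open Cardinal Set

/-- The first uncountable ordinal `ω₁`. -/
def ω1 : Ordinal.{0} := (Cardinal.aleph 1).ord

/-- We represent an element of the Cantor cube `2^α` (for an ordinal `α`) as a function
`Ordinal → Bool` vanishing on coordinates `≥ α`. `truncate α x` is the restriction
`x↾α` of `x` to `α` in this representation. -/
def truncate (α : Ordinal.{0}) (x : Ordinal.{0} → Bool) : Ordinal.{0} → Bool :=
  fun β => if β < α then x β else false

/-- Condition (R4) for `K ⊆ 2^{ω₁}` with split points `s_α ∈ 2^α` (for `ω ≤ α < ω₁`):
(i) both extensions of `s_α` by `0` and by `1` at coordinate `α` belong to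
`K_{α+1} = {x↾(α+1) : x ∈ K}`, and (ii) whenever `u, v ∈ K_{α+1}` satisfy `u↾α = v↾α`
and `u(α) ≠ v(α)`, then `u↾α = s_α`. -/
def CondR4 (K : Set (Ordinal.{0} → Bool)) (s : Ordinal.{0} → Ordinal.{0} → Bool) : Prop :=
  ∀ α : Ordinal.{0}, Ordinal.omega0 ≤ α → α < ω1 →
    truncate α (s α) = s α ∧
    (∀ b : Bool, Function.update (s α) α b ∈ truncate (α + 1) '' K) ∧
    (∀ u ∈ truncate (α + 1) '' K, ∀ v ∈ truncate (α + 1) '' K,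
      truncate α u = truncate α v → u α ≠ v α → truncate α u = s α)

/-- Condition (R8): whenever `ω ≤ α < β < ω₁`, `s_β↾α ≠ s_α`. -/
def CondR8 (s : Ordinal.{0} → Ordinal.{0} → Bool) : Prop :=
  ∀ α β : Ordinal.{0}, Ordinal.omega0 ≤ α → α < β → β < ω1 →
    truncate α (s β) ≠ s α


lemma truncate_truncate {γ δ : Ordinal.{0}} (h : γ ≤ δ) (x : Ordinal.{0} → Bool) :
    truncate γ (truncate δ x) = truncate γ x := by
  funext ε
  by_cases hε : ε < γ
  · simp [truncate, hε, hε.trans_le h]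
  · simp [truncate, hε]

lemma truncate_update {γ α : Ordinal.{0}} (h : γ ≤ α) (f : Ordinal.{0} → Bool) (b : Bool) :
    truncate γ (Function.update f α b) = truncate γ f := by
  funext δ
  by_cases hδ : δ < γ
  · simp [truncate, hδ, Function.update_of_ne (hδ.trans_le h).ne]
  · simp [truncate, hδ]

lemma truncate_add_one_apply_self (γ : Ordinal.{0}) (x : Ordinal.{0} → Bool) :
    truncate (γ + 1) x γ = x γ := by
  simp [truncate]

lemma exists_first_diff_of_truncate_ne {f g : Ordinal.{0} → Bool} {α : Ordinal.{0}}
    (h : truncate α f ≠ truncate α g) :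
    ∃ γ < α, truncate γ f = truncate γ g ∧ f γ ≠ g γ := by
  by_contra! hfirst
  have hagree : ∀ γ < α, f γ = g γ := by
    intro γ
    induction γ using WellFoundedLT.induction with
    | _ γ ih =>
      intro hγ
      refine hfirst γ hγ (funext fun δ => ?_)
      unfold truncate
      split_ifs with hδ
      exacts [ih δ hδ (hδ.trans hγ), rfl]
  exact h (funext fun δ => by unfold truncate; split_ifs with hδ; exacts [hagree δ hδ, rfl])

namespace CondR4

variable {K : Set (Ordinal.{0} → Bool)} {s : Ordinal.{0} → Ordinal.{0} → Bool}

lemma truncate_split_point_mem (hR4 : CondR4 K s) {α γ : Ordinal.{0}}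
    (hωα : Ordinal.omega0 ≤ α) (hα : α < ω1) (hγα : γ ≤ α) :
    truncate γ (s α) ∈ truncate γ '' K := by
  obtain ⟨x, hxK, hx⟩ := (hR4 α hωα hα).2.1 true
  refine ⟨x, hxK, ?_⟩
  rw [← truncate_truncate (hγα.trans (lt_add_one α).le) x, hx, truncate_update hγα]

lemma truncate_eq_of_first_diff (hR4 : CondR4 K s) {α β γ : Ordinal.{0}}
    (hωγ : Ordinal.omega0 ≤ γ) (hγα : γ < α) (hγβ : γ < β) (hα : α < ω1) (hβ : β < ω1)
    (hagree : truncate γ (s α) = truncate γ (s β)) (hdiff : s α γ ≠ s β γ) :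
    truncate γ (s α) = s γ := by
  have hγ : γ ≤ γ + 1 := (lt_add_one γ).le
  have hmem {δ : Ordinal.{0}} (hγδ : γ < δ) (hδ : δ < ω1) :
      truncate (γ + 1) (s δ) ∈ truncate (γ + 1) '' K :=
    hR4.truncate_split_point_mem (hωγ.trans hγδ.le) hδ (Order.add_one_le_of_lt hγδ)
  have hsplit := (hR4 γ hωγ (hγα.trans hα)).2.2 _ (hmem hγα hα) _ (hmem hγβ hβ)
    (by rwa [truncate_truncate hγ, truncate_truncate hγ])
    (by rwa [truncate_add_one_apply_self, truncate_add_one_apply_self])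
  rwa [truncate_truncate hγ] at hsplit

end CondR4

/-- The first coordinate `γ` where `s β` leaves `s α` (it exists by (R8)) is a branching level,
so `s α↾γ = s γ`, against (R8) unless `γ < ω`, i.e. unless the restrictions to `ω` differ. -/
lemma truncate_omega_split_point_ne_of_lt {K : Set (Ordinal.{0} → Bool)}
    {s : Ordinal.{0} → Ordinal.{0} → Bool} (hR4 : CondR4 K s) (hR8 : CondR8 s)
    {α β : Ordinal.{0}} (hωα : Ordinal.omega0 ≤ α) (hαβ : α < β) (hβ : β < ω1) :
    truncate Ordinal.omega0 (s α) ≠ truncate Ordinal.omega0 (s β) := by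
  intro heq
  have hα : α < ω1 := hαβ.trans hβ
  have hR8αβ : truncate α (s α) ≠ truncate α (s β) := by
    rw [(hR4 α hωα hα).1]
    exact (hR8 α β hωα hαβ hβ).symm
  obtain ⟨γ, hγα, hagree, hdiff⟩ := exists_first_diff_of_truncate_ne hR8αβ
  have hωγ : Ordinal.omega0 ≤ γ := not_lt.1 fun hγω => hdiff <| by
    simpa [truncate, hγω] using congrFun heq γ
  exact hR8 γ α hωγ hγα hα
    (hR4.truncate_eq_of_first_diff hωγ hγα (hγα.trans hαβ) hα hβ hagree hdiff)

theorem split_points_distinct_on_omega_general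
    (K : Set (Ordinal.{0} → Bool))
    (s : Ordinal.{0} → Ordinal.{0} → Bool) (hR4 : CondR4 K s) (hR8 : CondR8 s)
    (α β : Ordinal.{0}) (hωα : Ordinal.omega0 ≤ α) (hωβ : Ordinal.omega0 ≤ β)
    (hα : α < ω1) (hβ : β < ω1) (hne : α ≠ β) :
    truncate Ordinal.omega0 (s α) ≠ truncate Ordinal.omega0 (s β) := by
  rcases hne.lt_or_gt with h | h
  · exact truncate_omega_split_point_ne_of_lt hR4 hR8 hωα h hβ
  · exact (truncate_omega_split_point_ne_of_lt hR4 hR8 hωβ h hα).symm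

/-- Let `K` be a non-empty closed subset of `2^{ω₁}` satisfying conditions (R4) and (R8)
with split points `s_α` (`ω ≤ α < ω₁`). Then for any two distinct ordinals
`α, β ∈ [ω, ω₁)` we have `s_α↾ω ≠ s_β↾ω`. -/
theorem split_points_distinct_on_omega
    (K : Set (Ordinal.{0} → Bool)) (hKne : K.Nonempty) (hKcl : IsClosed K)
    (hKsub : ∀ x ∈ K, truncate ω1 x = x)
    (s : Ordinal.{0} → Ordinal.{0} → Bool) (hR4 : CondR4 K s) (hR8 : CondR8 s)
    (α β : Ordinal.{0}) (hωα : Ordinal.omega0 ≤ α) (hωβ : Ordinal.omega0 ≤ β)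
    (hα : α < ω1) (hβ : β < ω1) (hne : α ≠ β) :
    truncate Ordinal.omega0 (s α) ≠ truncate Ordinal.omega0 (s β) :=
  split_points_distinct_on_omega_general K s hR4 hR8 α β hωα hωβ hα hβ hne

end
end

section
/- Let K be a closed subspace of 2^{ω₁} and for α ≤ ω₁ let π_α : K → 2^α denote the restriction map x ↦ x↾α. Then K is hereditarily separable and hereditarily Lindelöf if and only if for every closed H ⊆ K there is an α < ω₁ such that π_α is irreducible on π_α^{-1}(π_α(H)). -/
noncomputable section

open Cardinal Set

/-- A map `f : X → Y` is *irreducible on* `A ⊆ X` if for every proper closed subset `F`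
of `A` (closed in the subspace `A`), the image `f '' F` is a proper subset of `f '' A`. -/
def IrreducibleOn {X Y : Type*} [TopologicalSpace X] (f : X → Y) (A : Set X) : Prop :=
  ∀ F : Set X, F ⊆ A → IsClosed ((fun a : ↥A => (a : X)) ⁻¹' F) → F ≠ A →
    f '' F ⊂ f '' A

/-! Restricting to the coordinates below `α < ω₁` lands in the compact metrizable space
`Iio α → Bool`. If `K` is hereditarily Lindelöf, every closed `H ⊆ K` (in particular every point)
is separated from its complement by countably many basic open sets, hence is `π_α`-saturated for
some `α < ω₁`. Choosing `α` above the levels of a countable dense `D ⊆ H` makes the fibres of `π_α`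
through `D` singletons; a proper closed `F ⊊ H` misses some `d ∈ D`, and then `π_α d ∉ π_α '' F`.

Conversely, irreducibility on `π_α⁻¹(π_α H)` forces `H` to be saturated. A saturated open set is
then the preimage of an open, hence `σ`-compact, subset of `Iio α → Bool`, so it is Lindelöf. For
`Y ⊆ K`, a countable `D ⊆ Y` with `π_α '' D` dense in `π_α '' Y` satisfies
`π_α '' closure D = π_α '' closure Y`, so irreducibility gives `closure D = closure Y`. -/

open Topology TopologicalSpace

section
variable {X Y Z : Type*} {f : X → Y} {g : X → Z}

theorem image_ssubset_image_iff_exists {F A : Set X} (hFA : F ⊆ A) :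
    f '' F ⊂ f '' A ↔ ∃ a ∈ A, ∀ x ∈ F, f x ≠ f a := by
  rw [ssubset_iff_of_subset (image_mono hFA)]
  simp

theorem preimage_image_congr (hfg : ∀ x y, f x = f y ↔ g x = g y) (H : Set X) :
    f ⁻¹' (f '' H) = g ⁻¹' (g '' H) := by
  ext x
  simp [hfg]

variable [TopologicalSpace X]

theorem irreducibleOn_congr (hfg : ∀ x y, f x = f y ↔ g x = g y) {A : Set X} :
    IrreducibleOn f A ↔ IrreducibleOn g A := by
  refine forall_congr' fun F => forall_congr' fun hFA => ?_
  simp only [image_ssubset_image_iff_exists hFA, ne_eq, hfg]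

theorem IrreducibleOn.preimage_image_eq {H : Set X} (hH : IsClosed H)
    (h : IrreducibleOn f (f ⁻¹' (f '' H))) : f ⁻¹' (f '' H) = H := by
  by_contra hne
  have hsub : H ⊆ f ⁻¹' (f '' H) := subset_preimage_image f H
  have := h H hsub (hH.preimage continuous_subtype_val) (Ne.symm hne)
  rw [image_preimage_eq_of_subset (image_subset_range f H)] at this
  exact this.ne rfl

theorem IrreducibleOn.eq_of_image_subset {H F : Set X} (h : IrreducibleOn f H) (hF : IsClosed F)
    (hFH : F ⊆ H) (himage : f '' H ⊆ f '' F) : F = H := by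
  by_contra hne
  exact (h F hFH (hF.preimage continuous_subtype_val) hne).not_subset himage

theorem irreducibleOn_of_subset_closure {D H : Set X} (hDH : D ⊆ H) (hHD : H ⊆ closure D)
    (hfiber : ∀ d ∈ D, ∀ x, f x = f d → x = d) : IrreducibleOn f H := by
  intro F hFH hF hne
  rw [isClosed_preimage_val, inter_eq_right.mpr hFH] at hF
  obtain ⟨z, hzH, hzF⟩ := exists_of_ssubset (hFH.ssubset_of_ne hne)
  have hz : z ∉ closure F := fun hz => hzF (hF ⟨hzH, hz⟩)
  obtain ⟨d, hdF, hdD⟩ := mem_closure_iff.mp (hHD hzH) _ isClosed_closure.isOpen_compl hz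
  rw [image_ssubset_image_iff_exists hFH]
  exact ⟨d, hDH hdD, fun x hxF hxd => hdF (subset_closure (hfiber d hdD x hxd ▸ hxF))⟩

end

theorem Topology.IsInducing.exists_countable_saturating {X ι : Type*} {Y : ι → Type*}
    [TopologicalSpace X] [∀ i, TopologicalSpace (Y i)] {g : X → ∀ i, Y i} (hg : IsInducing g)
    {U : Set X} (hU : IsOpen U) (hUL : IsLindelof U) :
    ∃ S : Set ι, S.Countable ∧ ∀ x ∈ U, ∀ y, (∀ i ∈ S, g y i = g x i) → y ∈ U := by
  obtain ⟨U', hU', rfl⟩ := hg.isOpen_iff.mp hU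
  choose I u hu hIU using fun x : ↥(g ⁻¹' U') => isOpen_pi_iff.mp hU' (g x) x.2
  obtain ⟨T, hTc, hTU⟩ := hUL.elim_countable_subcover (fun x => g ⁻¹' (I x : Set ι).pi (u x))
    (fun x => (isOpen_set_pi (I x).finite_toSet fun i hi => (hu x i hi).1).preimage
      hg.continuous)
    (fun x hx => mem_iUnion.mpr ⟨⟨x, hx⟩, fun i hi => (hu _ i hi).2⟩)
  refine ⟨⋃ t ∈ T, (I t : Set ι), hTc.biUnion fun t _ => (I t).countable_toSet,
    fun x hx y hyx => ?_⟩
  obtain ⟨t, htT, hxt⟩ := mem_iUnion₂.mp (hTU hx)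
  exact hIU t fun i hi => (hyx i (mem_biUnion htT hi)).symm ▸ hxt i hi

theorem exists_countable_subset_image_subset_closure {X Z : Type*} [TopologicalSpace Z]
    [SeparableSpace Z] [PseudoMetrizableSpace Z] (p : X → Z) (Y : Set X) :
    ∃ D ⊆ Y, D.Countable ∧ p '' Y ⊆ closure (p '' D) := by
  obtain ⟨t, htY, htc, hYt⟩ :=
    (IsSeparable.of_separableSpace (p '' Y)).exists_countable_dense_subset
  obtain ⟨D, hDY, hD⟩ := ((surjOn_image p Y).mono subset_rfl htY).exists_bijOn_subset
  exact ⟨D, hDY, hD.mapsTo.countable_of_injOn hD.injOn htc, hD.image_eq ▸ hYt⟩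

theorem separableSpace_of_subset_closure {X : Type*} [TopologicalSpace X] {D Y : Set X}
    (hDY : D ⊆ Y) (hD : D.Countable) (hYD : Y ⊆ closure D) : SeparableSpace Y :=
  have := hD.to_subtype
  ((denseRange_inclusion_iff hDY).mpr hYD).separableSpace (continuous_inclusion hDY)

section
variable {X Z : Type*} [TopologicalSpace X] [CompactSpace X] [TopologicalSpace Z] {p : X → Z}

theorem isSigmaCompact_preimage_of_isOpen [PerfectlyNormalSpace Z] (hp : Continuous p) {V : Set Z}
    (hV : IsOpen V) : IsSigmaCompact (p ⁻¹' V) := by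
  obtain ⟨T, hTo, hTc, hT⟩ := hV.isClosed_compl.isGδ
  have hV' : V = ⋃ O ∈ T, Oᶜ := by rw [← compl_compl V, hT, compl_sInter, sUnion_image]
  rw [hV', preimage_iUnion₂]
  exact isSigmaCompact_biUnion hTc fun O hO =>
    ((hTo O hO).isClosed_compl.preimage hp).isCompact.isSigmaCompact

variable [T2Space Z]

theorem isLindelof_compl_of_preimage_image_eq [PerfectlyNormalSpace Z] (hp : Continuous p)
    {H : Set X} (hH : IsClosed H) (hsat : p ⁻¹' (p '' H) = H) : IsLindelof Hᶜ := by
  rw [← hsat, ← preimage_compl]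
  exact (isSigmaCompact_preimage_of_isOpen hp
    (hH.isCompact.image hp).isClosed.isOpen_compl).isLindelof

theorem separableSpace_of_irreducibleOn_closure [SeparableSpace Z] [PseudoMetrizableSpace Z]
    (hp : Continuous p) {Y : Set X} (hirr : IrreducibleOn p (closure Y)) : SeparableSpace Y := by
  obtain ⟨D, hDY, hDc, hYD⟩ := exists_countable_subset_image_subset_closure p Y
  have hclosed : IsClosed (p '' closure D) := (isClosed_closure.isCompact.image hp).isClosed
  have hDY_closure : closure D = closure Y :=
    hirr.eq_of_image_subset isClosed_closure (closure_mono hDY) <| calc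
      p '' closure Y ⊆ closure (p '' Y) := image_closure_subset_closure_image hp
      _ ⊆ closure (p '' D) := closure_minimal hYD isClosed_closure
      _ ⊆ p '' closure D := closure_minimal (image_mono subset_closure) hclosed
  exact separableSpace_of_subset_closure hDY hDc (hDY_closure ▸ subset_closure)

end

theorem exists_lt_omega1_forall_lt {S : Set Ordinal.{0}} (hS : S.Countable)
    (hSω : ∀ β ∈ S, β < ω1) : ∃ α < ω1, ∀ β ∈ S, β < α := by
  have := hS.to_subtype
  rw [ω1, Cardinal.ord_aleph] at hSω ⊢
  refine ⟨⨆ β : S, Order.succ (β : Ordinal), Ordinal.iSup_lt_omega_one fun β =>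
    (Cardinal.isSuccLimit_omega 1).succ_lt (hSω β β.2), fun β hβ => ?_⟩
  exact (Order.lt_succ β).trans_le (le_ciSup Ordinal.bddAbove_of_small (⟨β, hβ⟩ : S))

theorem countable_Iio_of_lt_omega1 {α : Ordinal.{0}} (hα : α < ω1) : Countable (Iio α) := by
  rw [← Cardinal.mk_le_aleph0_iff, Cardinal.mk_Iio_ordinal, Cardinal.lift_le_aleph0,
    ← Cardinal.lt_aleph_one_iff]
  exact Cardinal.lt_ord.mp hα

/-- The projection `π_α`, with values in the second countable space `Iio α → Bool`. -/
def restrictIio (K : Set (Ordinal.{0} → Bool)) (α : Ordinal.{0}) (x : K) : Iio α → Bool :=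
  (Iio α).domRestrict (x : Ordinal.{0} → Bool)

section
variable {K : Set (Ordinal.{0} → Bool)}

theorem continuous_restrictIio (α : Ordinal.{0}) : Continuous (restrictIio K α) :=
  (Pi.continuous_domRestrict _).comp continuous_subtype_val

theorem restrictIio_eq_iff {α : Ordinal.{0}} {x y : K} :
    restrictIio K α x = restrictIio K α y ↔
      ∀ β < α, (x : Ordinal.{0} → Bool) β = (y : Ordinal.{0} → Bool) β := by
  simp [restrictIio, funext_iff]

theorem restrictIio_eq_of_le {α γ : Ordinal.{0}} (hαγ : α ≤ γ) {x y : K}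
    (h : restrictIio K γ x = restrictIio K γ y) : restrictIio K α x = restrictIio K α y :=
  restrictIio_eq_iff.mpr fun β hβ => restrictIio_eq_iff.mp h β (hβ.trans_le hαγ)

theorem truncate_eq_iff_restrictIio_eq {α : Ordinal.{0}} (x y : K) :
    truncate α x = truncate α y ↔ restrictIio K α x = restrictIio K α y := by
  rw [restrictIio_eq_iff, funext_iff]
  refine forall_congr' fun β => ?_
  by_cases hβ : β < α <;> simp [truncate, hβ]

theorem irreducibleOn_truncate_iff (α : Ordinal.{0}) (H : Set K) :
    IrreducibleOn (fun x : K => truncate α ↑x)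
        ((fun x : K => truncate α ↑x) ⁻¹' ((fun x : K => truncate α ↑x) '' H)) ↔
      IrreducibleOn (restrictIio K α) (restrictIio K α ⁻¹' (restrictIio K α '' H)) := by
  rw [preimage_image_congr truncate_eq_iff_restrictIio_eq]
  exact irreducibleOn_congr truncate_eq_iff_restrictIio_eq

theorem exists_lt_omega1_saturated (hKsub : ∀ x ∈ K, truncate ω1 x = x) {H : Set K}
    (hH : IsClosed H) (hHL : IsLindelof Hᶜ) :
    ∃ α < ω1, ∀ x ∈ H, ∀ y, restrictIio K α y = restrictIio K α x → y ∈ H := by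
  obtain ⟨S, hSc, hS⟩ :=
    IsInducing.subtypeVal.exists_countable_saturating hH.isOpen_compl hHL
  obtain ⟨α, hα, hSα⟩ :=
    exists_lt_omega1_forall_lt (hSc.mono inter_subset_left) fun β hβ => hβ.2
  refine ⟨α, hα, fun x hx y hyx => by_contra fun hy => hS y hy x (fun β hβS => ?_) hx⟩
  by_cases hβ : β < ω1
  · exact (restrictIio_eq_iff.mp hyx β (hSα β ⟨hβS, hβ⟩)).symm
  · rw [← hKsub _ x.2, ← hKsub _ y.2]
    simp [truncate, hβ]

theorem exists_lt_omega1_irreducibleOn (hKsub : ∀ x ∈ K, truncate ω1 x = x)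
    (hLin : ∀ Y : Set K, IsLindelof Y) {H : Set K} (hH : IsClosed H) [SeparableSpace H] :
    ∃ α < ω1, IrreducibleOn (restrictIio K α) (restrictIio K α ⁻¹' (restrictIio K α '' H)) := by
  obtain ⟨α₀, hα₀, hsatH⟩ := exists_lt_omega1_saturated hKsub hH (hLin _)
  choose γ hγ hsat using fun d : K =>
    exists_lt_omega1_saturated hKsub (isClosed_singleton (x := d)) (hLin _)
  obtain ⟨t, htc, htd⟩ := exists_countable_dense H
  have hHt : H ⊆ closure (Subtype.val '' t) := Subtype.dense_iff.mp htd
  obtain ⟨α, hα, hαbound⟩ :=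
    exists_lt_omega1_forall_lt ((htc.image (γ ∘ Subtype.val)).insert α₀)
      (by rintro β (rfl | ⟨d, -, rfl⟩); exacts [hα₀, hγ d])
  have hsaturated : restrictIio K α ⁻¹' (restrictIio K α '' H) = H :=
    subset_antisymm (fun x ⟨h, hh, hhx⟩ =>
        hsatH h hh x (restrictIio_eq_of_le (hαbound _ (mem_insert _ _)).le hhx.symm))
      (subset_preimage_image _ _)
  refine ⟨α, hα, ?_⟩
  rw [hsaturated]
  refine irreducibleOn_of_subset_closure (image_subset_iff.mpr fun x _ => x.2) hHt ?_
  rintro _ ⟨d, hdt, rfl⟩ x hxd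
  exact hsat d d rfl x
    (restrictIio_eq_of_le (hαbound _ (mem_insert_of_mem _ ⟨d, hdt, rfl⟩)).le hxd)

end

/-- Let `K` be a closed subspace of `2^{ω₁}` and for `α ≤ ω₁` let `π_α : K → 2^α` be the
restriction map `x ↦ x↾α`. Then `K` is hereditarily separable and hereditarily Lindelöf
if and only if for every closed `H ⊆ K` there is an `α < ω₁` such that `π_α` is
irreducible on `π_α⁻¹(π_α(H))`. -/
theorem hereditarilySeparable_and_hereditarilyLindelof_iff_irreducible_projections
    (K : Set (Ordinal.{0} → Bool)) (hKcl : IsClosed K)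
    (hKsub : ∀ x ∈ K, truncate ω1 x = x) :
    ((∀ Y : Set ↥K, TopologicalSpace.SeparableSpace Y) ∧
      (∀ Y : Set ↥K, IsLindelof Y)) ↔
    ∀ H : Set ↥K, IsClosed H → ∃ α : Ordinal.{0}, α < ω1 ∧
      IrreducibleOn (fun x : ↥K => truncate α ↑x)
        ((fun x : ↥K => truncate α ↑x) ⁻¹' ((fun x : ↥K => truncate α ↑x) '' H)) := by
  have : CompactSpace K := isCompact_iff_compactSpace.mp hKcl.isCompact
  simp_rw [irreducibleOn_truncate_iff]
  refine ⟨fun ⟨hSep, hLin⟩ H hH => ?_, fun h => ⟨fun Y => ?_, fun Y => ?_⟩⟩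
  · have := hSep H
    exact exists_lt_omega1_irreducibleOn hKsub hLin hH
  · obtain ⟨α, hα, hirr⟩ := h (closure Y) isClosed_closure
    have := countable_Iio_of_lt_omega1 hα
    rw [hirr.preimage_image_eq isClosed_closure] at hirr
    exact separableSpace_of_irreducibleOn_closure (continuous_restrictIio α) hirr
  · have : HereditarilyLindelofSpace K := .of_forall_isOpen fun W hW => by
      obtain ⟨α, hα, hirr⟩ := h Wᶜ hW.isClosed_compl
      have := countable_Iio_of_lt_omega1 hα
      simpa using isLindelof_compl_of_preimage_image_eq (continuous_restrictIio α)
        hW.isClosed_compl (hirr.preimage_image_eq hW.isClosed_compl)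
    exact HereditarilyLindelofSpace.isLindelof Y

end
end
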